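/- arXiv:math/0611908 — 2 statements merged into one kernel-verified Lean document; each statement's English description precedes it below -/
import Mathlib

section
/- Let n ≥ 2 be an integer and let u : ℝⁿ → ℝ be a convex C² function with |∇u(x)| < 1 for all x ∈ ℝⁿ satisfying the translating soliton equation Δu(x) + D²u(x)(∇u(x), ∇u(x))/(1 − |∇u(x)|²) = 1 for all x ∈ ℝⁿ, and let V_u(x) = lim_{ρ→∞} u(ρx)/ρ be its blowdown. Then |y|² ≤ V_u(y) ≤ |y| for every y in the closure of the gradient image ∇u(ℝⁿ) = {∇u(x) : x ∈ ℝⁿ}. -/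
/-!
Convexity gives the supporting hyperplane inequality `u x ≥ u x₀ + ⟪∇u x₀, x - x₀⟫`; evaluated at
`x = ρ y`, divided by `ρ` and letting `ρ → ∞`, it yields `⟪∇u x₀, y⟫ ≤ V_u y`, which passes to the
closure of the gradient image and gives `‖y‖² ≤ V_u y` at `y = lim ∇u xₖ`. The spacelike condition
makes `u` 1-Lipschitz, so `u (ρ y) ≤ u 0 + ρ ‖y‖` and hence `V_u y ≤ ‖y‖`.
-/

open Set Filter Topology RealInnerProductSpace

section Blowdown

variable {f : ℝ → ℝ} {a b L : ℝ}

theorem tendsto_affine_div_atTop (a b : ℝ) :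
    Tendsto (fun ρ : ℝ => (a * ρ + b) / ρ) atTop (𝓝 a) := by
  have h : Tendsto (fun ρ : ℝ => a + b / ρ) atTop (𝓝 (a + 0)) :=
    tendsto_const_nhds.add (tendsto_const_nhds.div_atTop tendsto_id)
  rw [add_zero] at h
  refine h.congr' ?_
  filter_upwards [eventually_ne_atTop 0] with ρ hρ
  field_simp

theorem le_of_tendsto_div_of_affine_le (hf : Tendsto (fun ρ => f ρ / ρ) atTop (𝓝 L))
    (h : ∀ᶠ ρ in atTop, a * ρ + b ≤ f ρ) : a ≤ L := by
  refine le_of_tendsto_of_tendsto (tendsto_affine_div_atTop a b) hf ?_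
  filter_upwards [h, eventually_gt_atTop 0] with ρ hρ hpos
  exact div_le_div_of_nonneg_right hρ hpos.le

theorem le_of_tendsto_div_of_le_affine (hf : Tendsto (fun ρ => f ρ / ρ) atTop (𝓝 L))
    (h : ∀ᶠ ρ in atTop, f ρ ≤ a * ρ + b) : L ≤ a := by
  refine le_of_tendsto_of_tendsto hf (tendsto_affine_div_atTop a b) ?_
  filter_upwards [h, eventually_gt_atTop 0] with ρ hρ hpos
  exact div_le_div_of_nonneg_right hρ hpos.le

end Blowdown

theorem ConvexOn.add_le_of_hasFDerivAt {E : Type*} [NormedAddCommGroup E] [NormedSpace ℝ E]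
    {s : Set E} {f : E → ℝ} {f' : E →L[ℝ] ℝ} {a b : E} (hf : ConvexOn ℝ s f) (ha : a ∈ s)
    (hb : b ∈ s) (hf' : HasFDerivAt f f' a) : f a + f' (b - a) ≤ f b := by
  set g : ℝ →ᵃ[ℝ] E := AffineMap.lineMap a b
  have hline : ConvexOn ℝ (g ⁻¹' s) (f ∘ g) := hf.comp_affineMap g
  have hderiv : HasDerivAt (f ∘ g) (f' (b - a)) 0 := by
    have hf'0 : HasFDerivAt f f' (g 0) := by simpa [g] using hf'
    exact hf'0.comp_hasDerivAt 0 AffineMap.hasDerivAt_lineMap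
  have := hline.le_slope_of_hasDerivAt (by simpa [g] using ha) (by simpa [g] using hb)
    zero_lt_one hderiv
  simp only [g, slope_def_field, Function.comp_apply, AffineMap.lineMap_apply_zero,
    AffineMap.lineMap_apply_one, sub_zero, div_one] at this
  linarith

section InnerProductSpace

variable {F : Type*} [NormedAddCommGroup F] [InnerProductSpace ℝ F] [CompleteSpace F] {u : F → ℝ}

theorem ConvexOn.add_inner_gradient_le (hu : ConvexOn ℝ univ u) {a : F}
    (hd : DifferentiableAt ℝ u a) (b : F) : u a + ⟪gradient u a, b - a⟫ ≤ u b :=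
  hu.add_le_of_hasFDerivAt (mem_univ a) (mem_univ b)
    (hasGradientAt_iff_hasFDerivAt.mp hd.hasGradientAt)

theorem ConvexOn.inner_gradient_le_of_tendsto_div (hu : ConvexOn ℝ univ u) {a y : F} {L : ℝ}
    (hd : DifferentiableAt ℝ u a)
    (hL : Tendsto (fun ρ : ℝ => u (ρ • y) / ρ) atTop (𝓝 L)) : ⟪gradient u a, y⟫ ≤ L := by
  refine le_of_tendsto_div_of_affine_le (b := u a - ⟪gradient u a, a⟫) hL
    (Eventually.of_forall fun ρ => ?_)
  have := hu.add_inner_gradient_le hd (ρ • y)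
  rw [inner_sub_right, real_inner_smul_right] at this
  linarith

theorem norm_fderiv_eq_norm_gradient (x : F) : ‖fderiv ℝ u x‖ = ‖gradient u x‖ := by
  rw [gradient, LinearIsometryEquiv.norm_map]

end InnerProductSpace

theorem LipschitzWith.le_mul_norm_of_tendsto_div {E : Type*} [SeminormedAddCommGroup E]
    [NormedSpace ℝ E] {u : E → ℝ} {K : NNReal} {y : E} {L : ℝ} (hu : LipschitzWith K u)
    (hL : Tendsto (fun ρ : ℝ => u (ρ • y) / ρ) atTop (𝓝 L)) : L ≤ K * ‖y‖ := by
  refine le_of_tendsto_div_of_le_affine (b := u 0) hL ?_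
  filter_upwards [eventually_ge_atTop 0] with ρ hρ
  have := hu.dist_le_mul (ρ • y) 0
  rw [Real.dist_eq, dist_zero_right, norm_smul, Real.norm_of_nonneg hρ] at this
  linarith [le_abs_self (u (ρ • y) - u 0)]

theorem stmt_15_general (n : ℕ) (u : EuclideanSpace ℝ (Fin n) → ℝ)
    (hconv : ConvexOn ℝ Set.univ u)
    (hC2 : ContDiff ℝ 2 u)
    (hsp : ∀ x, ‖gradient u x‖ < 1)
    (V : EuclideanSpace ℝ (Fin n) → ℝ)
    (hV : ∀ x, Filter.Tendsto (fun ρ : ℝ => u (ρ • x) / ρ) Filter.atTop (nhds (V x))) :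
    ∀ y ∈ closure (Set.range (gradient u)), ‖y‖ ^ 2 ≤ V y ∧ V y ≤ ‖y‖ := by
  have hdiff : Differentiable ℝ u := hC2.differentiable (by norm_num)
  intro y hy
  constructor
  · have hsub : range (gradient u) ⊆ {z | ⟪z, y⟫ ≤ V y} := by
      rintro _ ⟨x, rfl⟩
      exact hconv.inner_gradient_le_of_tendsto_div (hdiff x) (hV y)
    have hclosed : IsClosed {z | ⟪z, y⟫ ≤ V y} :=
      isClosed_le (continuous_id.inner continuous_const) continuous_const
    have hyy : ⟪y, y⟫ ≤ V y := closure_minimal hsub hclosed hy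
    rwa [real_inner_self_eq_norm_sq] at hyy
  · have hlip : LipschitzWith 1 u := lipschitzWith_of_nnnorm_fderiv_le hdiff fun x => by
      rw [← NNReal.coe_le_coe, coe_nnnorm, norm_fderiv_eq_norm_gradient]
      exact (hsp x).le
    simpa using hlip.le_mul_norm_of_tendsto_div (hV y)

theorem stmt_15 (n : ℕ) (hn : 2 ≤ n) (u : EuclideanSpace ℝ (Fin n) → ℝ)
    (hconv : ConvexOn ℝ Set.univ u)
    (hC2 : ContDiff ℝ 2 u)
    (hsp : ∀ x, ‖gradient u x‖ < 1)
    (heq : ∀ x : EuclideanSpace ℝ (Fin n),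
      (∑ i : Fin n, iteratedFDeriv ℝ 2 u x
          ![EuclideanSpace.single i 1, EuclideanSpace.single i 1]) +
        iteratedFDeriv ℝ 2 u x ![gradient u x, gradient u x] /
          (1 - ‖gradient u x‖ ^ 2) = 1)
    (V : EuclideanSpace ℝ (Fin n) → ℝ)
    (hV : ∀ x, Filter.Tendsto (fun ρ : ℝ => u (ρ • x) / ρ) Filter.atTop (nhds (V x))) :
    ∀ y ∈ closure (Set.range (gradient u)), ‖y‖ ^ 2 ≤ V y ∧ V y ≤ ‖y‖ :=
  stmt_15_general n u hconv hC2 hsp V hV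
end

section
/- Let n ≥ 2 be an integer and let u : ℝⁿ → ℝ be a convex C² function with |∇u(x)| < 1 for all x ∈ ℝⁿ satisfying the translating soliton equation Δu(x) + D²u(x)(∇u(x), ∇u(x))/(1 − |∇u(x)|²) = 1 for all x ∈ ℝⁿ. Then u(ρy)/ρ → 1 as ρ → ∞, uniformly for y ranging over the intersection of the closure of the gradient image ∇u(ℝⁿ) = {∇u(x) : x ∈ ℝⁿ} with the unit sphere S^{n−1} = {y ∈ ℝⁿ : |y| = 1}. -/
open Set Filter Topology

/-!
Convexity gives the supporting-hyperplane inequality `u x + ⟪∇u x, y - x⟫ ≤ u y`. Taken at the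
point `ρ • z` itself, together with `‖∇u‖ ≤ 1`, it gives `u (ρ • z) ≤ u 0 + ρ`; taken at a point `x`
whose gradient lies within `δ` of the unit vector `z`, it gives
`u (ρ • z) ≥ u x - ‖x‖ + ρ (1 - δ)`. Hence `u (ρ • z) / ρ → 1` locally uniformly on
`closure (range ∇u) ∩ sphere 0 1`, and so uniformly, this set being compact.
-/

open scoped Gradient RealInnerProductSpace

section

variable {F : Type*} [NormedAddCommGroup F] [InnerProductSpace ℝ F]

lemma one_sub_norm_sub_le_inner (g : F) {z : F} (hz : ‖z‖ = 1) : 1 - ‖g - z‖ ≤ ⟪g, z⟫ := by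
  have hsplit : ⟪g, z⟫ = 1 + ⟪g - z, z⟫ := by
    rw [inner_sub_left, real_inner_self_eq_norm_sq, hz]; ring
  have hcs : |⟪g - z, z⟫| ≤ ‖g - z‖ := by simpa [hz] using abs_real_inner_le_norm (g - z) z
  linarith [neg_abs_le ⟪g - z, z⟫]

variable [CompleteSpace F] {u : F → ℝ}

theorem ConvexOn.add_inner_gradient_le_s17 (hconv : ConvexOn ℝ univ u) {x : F}
    (hdiff : DifferentiableAt ℝ u x) (y : F) : u x + ⟪∇ u x, y - x⟫ ≤ u y := by
  let c : ℝ →ᵃ[ℝ] F := AffineMap.lineMap x y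
  have hline : HasDerivAt (u ∘ c) ⟪∇ u x, y - x⟫ 0 := by
    simpa using hdiff.hasGradientAt.hasFDerivAt.comp_hasDerivAt_of_eq (0 : ℝ)
      AffineMap.hasDerivAt_lineMap (by simp)
  have := (hconv.comp_affineMap c).le_slope_of_hasDerivAt
    (mem_univ 0) (mem_univ 1) one_pos hline
  rw [slope_def_field, Function.comp_apply, Function.comp_apply, AffineMap.lineMap_apply_zero,
    AffineMap.lineMap_apply_one, sub_zero, div_one] at this
  linarith

theorem ConvexOn.le_add_norm_sub (hconv : ConvexOn ℝ univ u) {y : F}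
    (hdiff : DifferentiableAt ℝ u y) (hgrad : ‖∇ u y‖ ≤ 1) (x : F) : u y ≤ u x + ‖y - x‖ := by
  have hsupp := hconv.add_inner_gradient_le_s17 hdiff x
  have hcs : -⟪∇ u y, x - y⟫ ≤ ‖y - x‖ := by
    rw [← inner_neg_right, neg_sub]
    exact (real_inner_le_norm _ _).trans
      (by simpa using mul_le_mul_of_nonneg_right hgrad (norm_nonneg (y - x)))
  linarith

theorem ConvexOn.le_apply_smul (hconv : ConvexOn ℝ univ u) {x : F}
    (hdiff : DifferentiableAt ℝ u x) (hgrad : ‖∇ u x‖ ≤ 1) {z : F} (hz : ‖z‖ = 1) {ρ : ℝ}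
    (hρ : 0 ≤ ρ) : u x - ‖x‖ + ρ * (1 - ‖∇ u x - z‖) ≤ u (ρ • z) := by
  have hsupp := hconv.add_inner_gradient_le_s17 hdiff (ρ • z)
  rw [inner_sub_right, real_inner_smul_right] at hsupp
  have hx : ⟪∇ u x, x⟫ ≤ ‖x‖ :=
    (real_inner_le_norm _ _).trans
      (by simpa using mul_le_mul_of_nonneg_right hgrad (norm_nonneg x))
  have hzin : ρ * (1 - ‖∇ u x - z‖) ≤ ρ * ⟪∇ u x, z⟫ :=
    mul_le_mul_of_nonneg_left (one_sub_norm_sub_le_inner _ hz) hρ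
  linarith

theorem ConvexOn.tendstoUniformlyOn_div_closure_range_gradient_inter_sphere [ProperSpace F]
    (hconv : ConvexOn ℝ univ u) (hdiff : Differentiable ℝ u) (hgrad : ∀ x, ‖∇ u x‖ ≤ 1) :
    TendstoUniformlyOn (fun (ρ : ℝ) (y : F) => u (ρ • y) / ρ) (fun _ => 1) atTop
      (closure (range (∇ u)) ∩ Metric.sphere 0 1) := by
  have hK : IsCompact (closure (range (∇ u)) ∩ Metric.sphere (0 : F) 1) :=
    (isCompact_sphere 0 1).inter_left isClosed_closure
  rw [← tendstoLocallyUniformlyOn_iff_tendstoUniformlyOn_of_compact hK,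
    Metric.tendstoLocallyUniformlyOn_iff]
  intro ε hε y hy
  obtain ⟨x, hxy⟩ : ∃ x, dist y (∇ u x) < ε / 4 :=
    Metric.mem_closure_range_iff.1 hy.1 _ (by positivity)
  refine ⟨_, inter_mem_nhdsWithin _ (Metric.ball_mem_nhds y (by positivity : 0 < ε / 4)), ?_⟩
  have hlarge (c : ℝ) : ∀ᶠ ρ in atTop, |c| < ρ * (ε / 2) :=
    (tendsto_id.atTop_mul_const (by positivity)).eventually_gt_atTop |c|
  filter_upwards [eventually_gt_atTop 0, hlarge (u 0), hlarge (u x - ‖x‖)]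
    with ρ hρ h0_lt hx_lt z ⟨hzK, hzy⟩
  have hz : ‖z‖ = 1 := mem_sphere_zero_iff_norm.1 hzK.2
  have hgz : ρ * ‖∇ u x - z‖ < ρ * (ε / 2) := by
    refine mul_lt_mul_of_pos_left ?_ hρ
    rw [← dist_eq_norm]
    linarith [dist_triangle (∇ u x) y z, dist_comm y (∇ u x), dist_comm z y,
      Metric.mem_ball.1 hzy]
  have hup : u (ρ • z) ≤ u 0 + ρ := by
    simpa [norm_smul, hz, abs_of_pos hρ] using hconv.le_add_norm_sub (hdiff (ρ • z)) (hgrad _) 0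
  have hlow := hconv.le_apply_smul (hdiff x) (hgrad x) hz hρ.le
  have hclose : |ρ - u (ρ • z)| < ρ * ε := by
    rw [abs_sub_lt_iff]
    constructor <;> linarith [abs_lt.1 h0_lt, abs_lt.1 hx_lt]
  rw [Real.dist_eq, one_sub_div hρ.ne', abs_div, abs_of_pos hρ, div_lt_iff₀ hρ]
  linarith

end

theorem stmt_17_general (n : ℕ) (u : EuclideanSpace ℝ (Fin n) → ℝ)
    (hconv : ConvexOn ℝ Set.univ u)
    (hC2 : ContDiff ℝ 2 u)
    (hsp : ∀ x, ‖gradient u x‖ < 1) :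
    TendstoUniformlyOn (fun (ρ : ℝ) (y : EuclideanSpace ℝ (Fin n)) => u (ρ • y) / ρ)
      (fun _ => (1 : ℝ)) Filter.atTop
      (closure (Set.range (gradient u)) ∩ Metric.sphere (0 : EuclideanSpace ℝ (Fin n)) 1) :=
  hconv.tendstoUniformlyOn_div_closure_range_gradient_inter_sphere
    (hC2.differentiable two_ne_zero) fun x => (hsp x).le

theorem stmt_17 (n : ℕ) (hn : 2 ≤ n) (u : EuclideanSpace ℝ (Fin n) → ℝ)
    (hconv : ConvexOn ℝ Set.univ u)
    (hC2 : ContDiff ℝ 2 u)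
    (hsp : ∀ x, ‖gradient u x‖ < 1)
    (heq : ∀ x : EuclideanSpace ℝ (Fin n),
      (∑ i : Fin n, iteratedFDeriv ℝ 2 u x
          ![EuclideanSpace.single i 1, EuclideanSpace.single i 1]) +
        iteratedFDeriv ℝ 2 u x ![gradient u x, gradient u x] /
          (1 - ‖gradient u x‖ ^ 2) = 1) :
    TendstoUniformlyOn (fun (ρ : ℝ) (y : EuclideanSpace ℝ (Fin n)) => u (ρ • y) / ρ)
      (fun _ => (1 : ℝ)) Filter.atTop
      (closure (Set.range (gradient u)) ∩ Metric.sphere (0 : EuclideanSpace ℝ (Fin n)) 1) :=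
  stmt_17_general n u hconv hC2 hsp
end
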